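/- Let (a_1, …, a_n) be a graphic sequence of positive integers (a_i ≥ 1 for all i, n ≥ 1). Then (a_1, …, a_n) is realizable as the degree sequence of a connected simple graph if and only if Σ_{i=1}^{n} a_i ≥ 2(n − 1). -/

import Mathlib

/-!
A connected graph on `n` vertices has at least `n - 1` edges, and the degree sum is twice the
number of edges; this gives necessity.

For sufficiency, take a realization whose reachability relation is maximal among all
realizations. If it were disconnected, it could not be a forest, since a forest with at least two
components has at most `n - 2` edges. So some edge `xy` lies on a cycle; pick `u` outside the
component of `x` and a neighbour `v` of `u` (all degrees are positive). The 2-switch replacing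
`xy, uv` by `xu, yv` preserves every degree, keeps `x` and `y` connected through the rest of the
cycle, and merges the component of `u` into that of `x`, contradicting maximality.
-/

open Finset

namespace SimpleGraph

variable {V : Type*} {G H : SimpleGraph V}

lemma reachable_le_of_adj_le_reachable (h : G.Adj ≤ H.Reachable) :
    G.Reachable ≤ H.Reachable := by
  simp only [reachable_eq_reflTransGen] at h ⊢
  exact Relation.reflTransGen_closed h

section Acyclic

variable [Fintype V]

lemma IsAcyclic.card_edgeFinset_lt [Fintype G.edgeSet] [Nonempty V] (hG : G.IsAcyclic) :
    #G.edgeFinset < Fintype.card V := by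
  classical
  obtain ⟨T, hGT, -, hT⟩ := connected_top.exists_isTree_le_of_le_of_isAcyclic le_top hG
  have hcard := hT.card_edgeFinset
  have hle : #G.edgeFinset ≤ #T.edgeFinset := card_le_card (edgeFinset_subset_edgeFinset.2 hGT)
  omega

lemma IsAcyclic.card_edgeFinset_add_two_le [DecidableRel G.Adj] [Nonempty V] (hG : G.IsAcyclic)
    (hconn : ¬G.Connected) : #G.edgeFinset + 2 ≤ Fintype.card V := by
  classical
  obtain ⟨u, v, huv⟩ : ∃ u v, ¬G.Reachable u v := by
    simpa [connected_iff, Preconnected] using hconn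
  have hne : u ≠ v := by rintro rfl; exact huv .rfl
  have hlt := (hG.sup_edge_of_not_reachable huv).card_edgeFinset_lt
  rw [card_edgeFinset_sup_edge G (fun h => huv h.reachable) hne] at hlt
  omega

end Acyclic

lemma degree_eq_ncard_neighborSet (v : V) [Fintype (G.neighborSet v)] :
    G.degree v = (G.neighborSet v).ncard := by
  rw [← card_neighborSet_eq_degree, ← Nat.card_eq_fintype_card, Nat.card_coe_set_eq]

lemma degree_eq_of_neighborSet_eq_exchange {p r s : V} [Fintype (G.neighborSet p)]
    [Fintype (H.neighborSet p)] (h : H.neighborSet p = insert s (G.neighborSet p \ {r}))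
    (hr : G.Adj p r) (hs : ¬G.Adj p s) : H.degree p = G.degree p := by
  rw [degree_eq_ncard_neighborSet, degree_eq_ncard_neighborSet, h]
  exact Set.ncard_exchange hs hr

def switch (G : SimpleGraph V) (x y u v : V) : SimpleGraph V :=
  G.deleteEdges {s(x, y), s(u, v)} ⊔ edge x u ⊔ edge y v

variable {x y u v p : V}

lemma switch_swap : G.switch x y u v = G.switch y x v u := by
  ext p q
  simp only [switch, sup_adj, deleteEdges_adj, edge_adj, Set.mem_insert_iff,
    Set.mem_singleton_iff, Sym2.eq_swap]
  tauto

lemma switch_comm : G.switch x y u v = G.switch u v x y := by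
  ext p q
  simp only [switch, sup_adj, deleteEdges_adj, edge_adj, Set.mem_insert_iff,
    Set.mem_singleton_iff]
  tauto

lemma neighborSet_switch_left (hxy : x ≠ y) (hxu : x ≠ u) (hxv : x ≠ v) :
    (G.switch x y u v).neighborSet x = insert u (G.neighborSet x \ {y}) := by
  ext q
  simp only [switch, neighborSet_sup, Set.mem_union, mem_neighborSet, deleteEdges_adj, edge_adj,
    Set.mem_insert_iff, Set.mem_singleton_iff, Set.mem_sdiff, Sym2.eq_iff]
  grind

lemma neighborSet_switch_of_ne (hx : p ≠ x) (hy : p ≠ y) (hu : p ≠ u) (hv : p ≠ v) :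
    (G.switch x y u v).neighborSet p = G.neighborSet p := by
  ext q
  simp [switch, edge_adj, hx, hy, hu, hv]

lemma degree_switch [Fintype (G.neighborSet p)] [Fintype ((G.switch x y u v).neighborSet p)]
    (hxy : G.Adj x y) (huv : G.Adj u v) (hnxu : ¬G.Adj x u) (hnyv : ¬G.Adj y v)
    (hxu : x ≠ u) (hxv : x ≠ v) (hyu : y ≠ u) (hyv : y ≠ v) :
    (G.switch x y u v).degree p = G.degree p := by
  by_cases hpx : p = x
  · subst hpx
    exact degree_eq_of_neighborSet_eq_exchange (neighborSet_switch_left hxy.ne hxu hxv) hxy hnxu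
  by_cases hpy : p = y
  · subst hpy
    refine degree_eq_of_neighborSet_eq_exchange ?_ hxy.symm hnyv
    rw [switch_swap, neighborSet_switch_left hxy.ne.symm hyv hyu]
  by_cases hpu : p = u
  · subst hpu
    refine degree_eq_of_neighborSet_eq_exchange ?_ huv fun h => hnxu h.symm
    rw [switch_comm, neighborSet_switch_left huv.ne hxu.symm hyu.symm]
  by_cases hpv : p = v
  · subst hpv
    refine degree_eq_of_neighborSet_eq_exchange ?_ huv.symm fun h => hnyv h.symm
    rw [switch_comm, switch_swap, neighborSet_switch_left huv.ne.symm hyv.symm hxv.symm]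
  rw [degree_eq_ncard_neighborSet, degree_eq_ncard_neighborSet,
    neighborSet_switch_of_ne hpx hpy hpu hpv]

lemma reachable_lt_reachable_switch (hxy : (G.deleteEdges {s(x, y)}).Reachable x y)
    (hxu : ¬G.Reachable x u) (huv : G.Adj u v) :
    G.Reachable < (G.switch x y u v).Reachable := by
  classical
  set G' := G.switch x y u v
  have hyv : y ≠ v := by
    rintro rfl
    exact hxu ((hxy.mono (deleteEdges_le _)).trans huv.symm.reachable)
  have hxu' : G'.Adj x u :=
    .inl <| .inr <| (edge_adj ..).2 ⟨.inl ⟨rfl, rfl⟩, fun h => hxu (h ▸ .rfl)⟩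
  have hyv' : G'.Adj y v := .inr <| (edge_adj ..).2 ⟨.inl ⟨rfl, rfl⟩, hyv⟩
  have hxy' : G'.Reachable x y := by
    obtain ⟨W⟩ := hxy
    have hW : s(u, v) ∉ W.edges := fun he =>
      hxu ((W.takeUntil u (W.fst_mem_support_of_mem_edges he)).reachable.mono
        (deleteEdges_le _))
    refine (W.toDeleteEdges {s(u, v)} fun e he hev => hW (hev ▸ he)).reachable.mono ?_
    rw [deleteEdges_deleteEdges, Set.singleton_union]
    exact le_sup_left.trans le_sup_left
  have hle : G.Reachable ≤ G'.Reachable := by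
    refine reachable_le_of_adj_le_reachable fun p q hpq => ?_
    by_cases h₁ : s(p, q) = s(x, y)
    · rcases Sym2.eq_iff.1 h₁ with ⟨rfl, rfl⟩ | ⟨rfl, rfl⟩
      exacts [hxy', hxy'.symm]
    by_cases h₂ : s(p, q) = s(u, v)
    · have huv' : G'.Reachable u v := hxu'.symm.reachable.trans (hxy'.trans hyv'.reachable)
      rcases Sym2.eq_iff.1 h₂ with ⟨rfl, rfl⟩ | ⟨rfl, rfl⟩
      exacts [huv', huv'.symm]
    exact Adj.reachable (by simp [G', switch, hpq, h₁, h₂])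
  exact lt_of_le_of_ne hle fun h => hxu (h ▸ hxu'.reachable)

open scoped Classical in
lemma exists_degree_eq_reachable_gt [Fintype V] (hconn : ¬G.Connected) (hcyc : ¬G.IsAcyclic)
    (hiso : ∀ v, ∃ w, G.Adj v w) :
    ∃ G' : SimpleGraph V, (∀ v, G'.degree v = G.degree v) ∧ G.Reachable < G'.Reachable := by
  obtain ⟨x, y, hxy, hbr⟩ : ∃ x y, G.Adj x y ∧ ¬G.IsBridge s(x, y) := by
    simpa [isAcyclic_iff_forall_adj_isBridge] using hcyc
  obtain ⟨u, hxu⟩ : ∃ u, ¬G.Reachable x u := by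
    simp only [connected_iff_exists_forall_reachable, not_exists, not_forall] at hconn
    exact hconn x
  obtain ⟨v, huv⟩ := hiso u
  have hyu : ¬G.Reachable y u := fun h => hxu (hxy.reachable.trans h)
  have hxv : ¬G.Reachable x v := fun h => hxu (h.trans huv.symm.reachable)
  have hyv : ¬G.Reachable y v := fun h => hyu (h.trans huv.symm.reachable)
  have ne_of_not_reachable : ∀ {a b : V}, ¬G.Reachable a b → a ≠ b :=
    fun h hab => h (hab ▸ .rfl)
  refine ⟨G.switch x y u v, fun p => ?_,
    reachable_lt_reachable_switch (isBridge_iff.not_left.1 hbr) hxu huv⟩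
  exact degree_switch hxy huv (fun h => hxu h.reachable) (fun h => hyv h.reachable)
    (ne_of_not_reachable hxu) (ne_of_not_reachable hxv) (ne_of_not_reachable hyu)
    (ne_of_not_reachable hyv)

end SimpleGraph

open SimpleGraph

open scoped Classical in
theorem stmt_12 {n : ℕ} (hn : 1 ≤ n) (a : Fin n → ℕ) (ha : ∀ i, 1 ≤ a i)
    (hgraphic : ∃ G : SimpleGraph (Fin n), ∀ i, G.degree i = a i) :
    (∃ G : SimpleGraph (Fin n), G.Connected ∧ ∀ i, G.degree i = a i) ↔
      2 * (n - 1) ≤ ∑ i, a i := by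
  have hsum : ∀ G : SimpleGraph (Fin n), (∀ i, G.degree i = a i) →
      ∑ i, a i = 2 * #G.edgeFinset := fun G hG => by
    simp_rw [← hG]
    exact G.sum_degrees_eq_twice_card_edges
  constructor
  · rintro ⟨G, hconn, hG⟩
    have hcard := hconn.card_vert_le_card_edgeSet_add_one
    rw [Nat.card_fin, Nat.card_eq_fintype_card, ← edgeFinset_card] at hcard
    have := hsum G hG
    omega
  · intro h2n
    have : Nonempty (Fin n) := ⟨⟨0, hn⟩⟩
    obtain ⟨G, hG, hmax⟩ := Set.Finite.exists_maximalFor Reachable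
      {G : SimpleGraph (Fin n) | ∀ i, G.degree i = a i} (Set.toFinite _) hgraphic
    refine ⟨G, by_contra fun hconn => ?_, hG⟩
    have hcyc : ¬G.IsAcyclic := fun hacyc => by
      have hcard := hacyc.card_edgeFinset_add_two_le hconn
      rw [Fintype.card_fin] at hcard
      have := hsum G hG
      omega
    obtain ⟨G', hdeg, hlt⟩ := exists_degree_eq_reachable_gt hconn hcyc
      fun v => (G.degree_pos_iff_exists_adj v).mp (hG v ▸ ha v)
    exact hlt.not_ge (hmax (fun i => (hdeg i).trans (hG i)) hlt.le)
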